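/- Let X be a finite connected simplicial complex, δ a cellular perversity, and S an object of R(X,δ). Let Δ_I ≥ Δ_T in Λ(X,δ), and let Δ_I = Δ_0 > Δ_1 > … > Δ_n = Δ_T and Δ_I = Δ′_0 > Δ′_1 > … > Δ′_n = Δ_T be any two sequences of simplices with δ(Δ_i) = δ(Δ_{i+1}) + 1 and δ(Δ′_i) = δ(Δ′_{i+1}) + 1 for all 0 ≤ i ≤ n−1 (consecutive members of such sequences are automatically incident, so all the restriction maps below are defined). Then the composites agree: s(Δ_{n−1},Δ_n)∘…∘s(Δ_0,Δ_1) = s(Δ′_{n−1},Δ′_n)∘…∘s(Δ′_0,Δ′_1); hence s(Δ_I,Δ_T) : S(Δ_I) → S(Δ_T) is well defined (Lemma-Definition 1.2.5). -/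
import Mathlib


open CategoryTheory

structure SComplex (V : Type) [Fintype V] [DecidableEq V] where
  faces : Finset (Finset V)
  nonempty_of_mem : ∀ s ∈ faces, s.Nonempty
  down_closed : ∀ s ∈ faces, ∀ t, t ⊆ s → t.Nonempty → t ∈ faces

namespace SComplex

variable {V : Type} [Fintype V] [DecidableEq V]

def Sim (K : SComplex V) : Type := {Δ : Finset V // Δ ∈ K.faces}

def dime (Δ : Finset V) : ℕ := Δ.card - 1

/-- Two simplices are incident if one is a face of the other. -/
def Incident (Δ Δ' : Finset V) : Prop := Δ ⊆ Δ' ∨ Δ' ⊆ Δ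

def Connected (K : SComplex V) : Prop :=
  ∀ Δ ∈ K.faces, ∀ Δ' ∈ K.faces,
    Relation.ReflTransGen (fun s t => s ∈ K.faces ∧ t ∈ K.faces ∧ (s ∩ t).Nonempty) Δ Δ'

def IsLadder (K : SComplex V) (w : Finset V → ℤ) (f : ℕ → Finset V) (r : ℕ) : Prop :=
  (∀ i ≤ r, f i ∈ K.faces) ∧
  (∀ i < r, Incident (f i) (f (i + 1)) ∧ w (f i) = w (f (i + 1)) + 1)

/-- `Δ ≥ Δ'` in `Λ(X,δ)`. -/
def lamGE (K : SComplex V) (w : Finset V → ℤ) (Δ Δ' : Finset V) : Prop :=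
  ∃ (f : ℕ → Finset V) (r : ℕ), IsLadder K w f r ∧ f 0 = Δ ∧ f r = Δ'

variable (F : Type) [Field F]

/-- An object of `R(X,δ)`. -/
structure RObj (K : SComplex V) (w : Finset V → ℤ) where
  stalk : Sim K → ModuleCat F
  fd : ∀ Δ, Module.Finite F (stalk Δ)
  map : ∀ Δ Δ' : Sim K, Incident Δ.1 Δ'.1 → w Δ.1 = w Δ'.1 + 1 → (stalk Δ ⟶ stalk Δ')
  equivAxiom : ∀ (Δ' Δ₁ Δ₂ Δ'' : Sim K)
    (h1 : Incident Δ'.1 Δ₁.1) (e1 : w Δ'.1 = w Δ₁.1 + 1)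
    (h2 : Incident Δ₁.1 Δ''.1) (e2 : w Δ₁.1 = w Δ''.1 + 1)
    (h3 : Incident Δ'.1 Δ₂.1) (e3 : w Δ'.1 = w Δ₂.1 + 1)
    (h4 : Incident Δ₂.1 Δ''.1) (e4 : w Δ₂.1 = w Δ''.1 + 1),
    map Δ' Δ₁ h1 e1 ≫ map Δ₁ Δ'' h2 e2 = map Δ' Δ₂ h3 e3 ≫ map Δ₂ Δ'' h4 e4

variable {F}

/-- The structure map of an object of `R(X,δ)`, extended (by zero) to an arbitrary pair
of simplices; for a pair which is incident with `δ`-values differing by one this is the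
restriction map itself. -/
noncomputable def emap {K : SComplex V} {w : Finset V → ℤ} (S : RObj F K w)
    (Δ Δ' : Sim K) : S.stalk Δ ⟶ S.stalk Δ' :=
  haveI : Decidable (Incident Δ.1 Δ'.1 ∧ w Δ.1 = w Δ'.1 + 1) := Classical.propDecidable _
  if h : Incident Δ.1 Δ'.1 ∧ w Δ.1 = w Δ'.1 + 1 then S.map Δ Δ' h.1 h.2 else 0

/-- The composite of the restriction maps along a sequence of simplices. -/
noncomputable def pathMap {K : SComplex V} {w : Finset V → ℤ} (S : RObj F K w)
    (f : ℕ → Sim K) : (k : ℕ) → (S.stalk (f 0) ⟶ S.stalk (f k))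
  | 0 => 𝟙 _
  | k + 1 => pathMap S f k ≫ emap S (f k) (f (k + 1))

end SComplex

open SComplex

structure CellPerversity where
  d : ℕ → ℤ
  zero : d 0 = 0
  step : ∀ k : ℕ, 1 ≤ k →
    ((∀ i < k, d i < d k) ∧ (∃ i < k, d k = d i + 1)) ∨
    ((∀ i < k, d k < d i) ∧ (∃ i < k, d k = d i - 1))

def pd {V : Type} [Fintype V] [DecidableEq V] (P : CellPerversity) (Δ : Finset V) : ℤ :=
  P.d (dime Δ)

namespace CellPerversity
variable (P : CellPerversity)

lemma d_ne (i j : ℕ) (hij : i < j) : P.d i ≠ P.d j := by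
  rcases P.step j (Nat.one_le_iff_ne_zero.mpr (by omega)) with ⟨h, -⟩ | ⟨h, -⟩
  · exact ne_of_lt (h i hij)
  · exact (ne_of_lt (h i hij)).symm

lemma d_injective : Function.Injective P.d := by
  intro i j h
  rcases lt_trichotomy i j with hij | hij | hij
  · exact absurd h (P.d_ne i j hij)
  · exact hij
  · exact absurd h.symm (P.d_ne j i hij)

lemma lt_dim_of_nonneg {i j : ℕ} (h0 : 0 ≤ P.d i) (h : P.d i < P.d j) : i < j := by
  by_contra hc
  push_neg at hc
  rcases Nat.lt_or_ge j i with hji | hji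
  · rcases Nat.eq_zero_or_pos i with rfl | hi
    · omega
    · rcases P.step i hi with ⟨hm, -⟩ | ⟨hm, -⟩
      · exact absurd (hm j hji) (by omega)
      · have := hm 0 (by omega); rw [P.zero] at this; omega
  · have : i = j := le_antisymm hji hc
    rw [this] at h; exact lt_irrefl _ h

lemma lt_dim_of_nonpos {i j : ℕ} (h0 : P.d i ≤ 0) (h : P.d j < P.d i) : i < j := by
  by_contra hc
  push_neg at hc
  rcases Nat.lt_or_ge j i with hji | hji
  · rcases Nat.eq_zero_or_pos i with rfl | hi
    · omega
    · rcases P.step i hi with ⟨hm, -⟩ | ⟨hm, -⟩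
      · have := hm 0 (by omega); rw [P.zero] at this; omega
      · exact absurd (hm j hji) (by omega)
  · have : i = j := le_antisymm hji hc
    rw [this] at h; exact lt_irrefl _ h

lemma le_dim_of_nonneg {i j : ℕ} (h0 : 0 ≤ P.d i) (h : P.d i ≤ P.d j) : i ≤ j := by
  rcases eq_or_lt_of_le h with he | hlt
  · exact le_of_eq (P.d_injective he)
  · exact le_of_lt (P.lt_dim_of_nonneg h0 hlt)

lemma le_dim_of_nonpos {i j : ℕ} (h0 : P.d i ≤ 0) (h : P.d j ≤ P.d i) : i ≤ j := by
  rcases eq_or_lt_of_le h with he | hlt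
  · exact le_of_eq (P.d_injective he.symm)
  · exact le_of_lt (P.lt_dim_of_nonpos h0 hlt)

lemma exists_dim_of_nonneg {v : ℤ} (h0 : 0 ≤ v) {j : ℕ} (hj : v ≤ P.d j) :
    ∃ κ, P.d κ = v := by
  induction j using Nat.strong_induction_on with
  | _ j ih =>
    rcases eq_or_lt_of_le hj with he | hlt
    · exact ⟨j, he.symm⟩
    · rcases Nat.eq_zero_or_pos j with rfl | hjpos
      · rw [P.zero] at hlt; omega
      · rcases P.step j hjpos with ⟨-, i, hi, he⟩ | ⟨hm, -⟩
        · exact ih i hi (by omega)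
        · have := hm 0 (by omega); rw [P.zero] at this; omega

lemma exists_dim_of_nonpos {v : ℤ} (h0 : v ≤ 0) {j : ℕ} (hj : P.d j ≤ v) :
    ∃ κ, P.d κ = v := by
  induction j using Nat.strong_induction_on with
  | _ j ih =>
    rcases eq_or_lt_of_le hj with he | hlt
    · exact ⟨j, he⟩
    · rcases Nat.eq_zero_or_pos j with rfl | hjpos
      · rw [P.zero] at hlt; omega
      · rcases P.step j hjpos with ⟨hm, -⟩ | ⟨-, i, hi, he⟩
        · have := hm 0 (by omega); rw [P.zero] at this; omega
        · exact ih i hi (by omega)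

end CellPerversity
namespace SComplex
variable {V : Type} [Fintype V] [DecidableEq V] {K : SComplex V} (P : CellPerversity)

/-- One step of a δ-decreasing path. -/
def Stp (a b : Sim K) : Prop := Incident a.1 b.1 ∧ pd P a.1 = pd P b.1 + 1

def Stps (f : ℕ → Sim K) (n : ℕ) : Prop := ∀ i < n, Stp P (f i) (f (i + 1))

def Wk (m : ℕ) (a b : Sim K) : Prop := ∃ f, f 0 = a ∧ f m = b ∧ Stps P f m

variable {P}

lemma card_pos_of_sim (a : Sim K) : 1 ≤ a.1.card :=
  Finset.card_pos.mpr (K.nonempty_of_mem a.1 a.2)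

lemma dime_add_one (a : Sim K) : dime a.1 + 1 = a.1.card := by
  have := card_pos_of_sim a
  unfold dime; omega

lemma card_eq_of_pd_eq {a b : Sim K} (h : pd P a.1 = pd P b.1) : a.1.card = b.1.card := by
  have := P.d_injective h
  have ha := dime_add_one a; have hb := dime_add_one b
  omega

lemma eq_of_pd_eq_subset {a b : Sim K} (h : pd P a.1 = pd P b.1) (hs : b.1 ⊆ a.1) :
    a = b := by
  exact Subtype.ext (Finset.eq_of_subset_of_card_le hs (le_of_eq (card_eq_of_pd_eq h))).symm

lemma pd_def (Δ : Finset V) : pd P Δ = P.d (dime Δ) := rfl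

lemma stp_down {a b : Sim K} (h : Stp P a b) (hb : 0 ≤ pd P b.1) :
    b.1 ⊆ a.1 ∧ b.1.card < a.1.card := by
  have h2 := h.2
  rw [pd_def, pd_def] at h2
  have hd : dime b.1 < dime a.1 :=
    P.lt_dim_of_nonneg (by rw [pd_def] at hb; exact hb) (by omega)
  have hca := dime_add_one a; have hcb := dime_add_one b
  have hcard : b.1.card < a.1.card := by omega
  rcases h.1 with hs | hs
  · exact absurd (Finset.card_le_card hs) (by omega)
  · exact ⟨hs, hcard⟩

lemma stp_up {a b : Sim K} (h : Stp P a b) (hb : pd P b.1 ≤ -1) :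
    a.1 ⊆ b.1 ∧ a.1.card < b.1.card := by
  have h2 := h.2
  rw [pd_def, pd_def] at h2
  rw [pd_def] at hb
  have hd : dime a.1 < dime b.1 :=
    P.lt_dim_of_nonpos (by omega) (by omega)
  have hca := dime_add_one a; have hcb := dime_add_one b
  have hcard : a.1.card < b.1.card := by omega
  rcases h.1 with hs | hs
  · exact ⟨hs, hcard⟩
  · exact absurd (Finset.card_le_card hs) (by omega)

lemma wk_zero {a b : Sim K} (h : Wk P 0 a b) : a = b := by
  obtain ⟨f, h0, hm, -⟩ := h; rw [← h0, hm]

lemma wk_refl (a : Sim K) : Wk P 0 a a := ⟨fun _ => a, rfl, rfl, fun i hi => absurd hi (by omega)⟩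

lemma wk_tail {m : ℕ} {a b : Sim K} (h : Wk P (m + 1) a b) :
    ∃ c, Stp P a c ∧ Wk P m c b := by
  obtain ⟨f, h0, hm, hs⟩ := h
  refine ⟨f 1, h0 ▸ hs 0 (by omega), fun i => f (i + 1), rfl, hm, fun i hi => hs (i + 1) (by omega)⟩

lemma wk_prepend {m : ℕ} {a c b : Sim K} (h : Stp P a c) (hw : Wk P m c b) :
    Wk P (m + 1) a b := by
  obtain ⟨f, h0, hm, hs⟩ := hw
  refine ⟨fun i => if i = 0 then a else f (i - 1), by simp, by simp [hm], fun i hi => ?_⟩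
  rcases Nat.eq_zero_or_pos i with rfl | hi0
  · simpa [h0] using h
  · have : i ≠ 0 := by omega
    simpa [this, Nat.succ_ne_zero, Nat.sub_add_cancel hi0] using
      (by simpa using hs (i - 1) (by omega) : Stp P (f (i-1)) (f (i - 1 + 1)))

lemma wk_trans {m m' : ℕ} {a b c : Sim K} (h : Wk P m a b) (h' : Wk P m' b c) :
    Wk P (m + m') a c := by
  induction m generalizing a with
  | zero => rw [wk_zero h]; simpa using h'
  | succ k ih =>
    obtain ⟨c0, hst, hw⟩ := wk_tail h
    have := wk_prepend hst (ih hw)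
    rwa [show k + m' + 1 = k + 1 + m' by omega] at this

lemma wk_pd {m : ℕ} {a b : Sim K} (h : Wk P m a b) : pd P a.1 = pd P b.1 + m := by
  induction m generalizing a with
  | zero => rw [wk_zero h]; simp
  | succ k ih =>
    obtain ⟨c, hst, hw⟩ := wk_tail h
    have := ih hw
    push_cast
    have h2 := hst.2
    omega

lemma wk_down_subset {m : ℕ} {a t : Sim K} (h : Wk P m a t) (ht : 0 ≤ pd P t.1) :
    t.1 ⊆ a.1 := by
  induction m generalizing a with
  | zero => rw [wk_zero h]
  | succ k ih =>
    obtain ⟨c, hst, hw⟩ := wk_tail h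
    have hc : 0 ≤ pd P c.1 := by have := wk_pd hw; omega
    exact (ih hw).trans (stp_down hst hc).1

lemma wk_up_subset {m : ℕ} {a t : Sim K} (h : Wk P m a t) (ha : pd P a.1 ≤ 0) :
    a.1 ⊆ t.1 := by
  induction m generalizing a with
  | zero => rw [wk_zero h]
  | succ k ih =>
    obtain ⟨c, hst, hw⟩ := wk_tail h
    have hc : pd P c.1 ≤ -1 := by have := hst.2; omega
    exact (stp_up hst hc).1.trans (ih hw (by omega))

lemma wk_cross_mem {m : ℕ} {a t : Sim K} (h : Wk P m a t) (ha : 1 ≤ pd P a.1)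
    (ht : pd P t.1 ≤ -1) : ∃ p, p ∈ a.1 ∧ p ∈ t.1 := by
  induction m generalizing a with
  | zero => rw [wk_zero h] at ha; omega
  | succ k ih =>
    obtain ⟨c, hst, hw⟩ := wk_tail h
    have hsub : c.1 ⊆ a.1 := (stp_down hst (by have := hst.2; omega)).1
    rcases lt_or_ge (pd P c.1) 1 with hc | hc
    · have hc0 : pd P c.1 = 0 := by have := hst.2; omega
      have hsubt : c.1 ⊆ t.1 := wk_up_subset hw (by omega)
      obtain ⟨p, hp⟩ := K.nonempty_of_mem c.1 c.2
      exact ⟨p, hsub hp, hsubt hp⟩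
    · obtain ⟨p, hp1, hp2⟩ := ih hw hc
      exact ⟨p, hsub hp1, hp2⟩

end SComplex
namespace SComplex
variable {V : Type} [Fintype V] [DecidableEq V] {K : SComplex V} {P : CellPerversity}

lemma dime_of_card {S : Finset V} {κ : ℕ} (h : S.card = κ + 1) : dime S = κ := by
  unfold dime; omega

lemma pd_eq_of_card_eq {s t : Finset V} (h : s.card = t.card) : pd P s = pd P t := by
  rw [pd_def, pd_def]; unfold dime; rw [h]

lemma wk_of_down {m : ℕ} {a b : Sim K} (hb : 0 ≤ pd P b.1) (hsub : b.1 ⊆ a.1)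
    (hm : pd P a.1 = pd P b.1 + m) : Wk P m a b := by
  induction m generalizing a with
  | zero =>
    have h : pd P a.1 = pd P b.1 := by push_cast at hm; omega
    rw [eq_of_pd_eq_subset h hsub]; exact wk_refl b
  | succ k ih =>
    have hva : (pd P b.1 + k : ℤ) ≤ P.d (dime a.1) := by rw [← pd_def]; push_cast at hm ⊢; omega
    obtain ⟨κ, hκ⟩ := P.exists_dim_of_nonneg (by omega) hva
    have hbk : dime b.1 ≤ κ := P.le_dim_of_nonneg (by rw [← pd_def]; omega) (by rw [← pd_def]; omega)
    have hka : κ < dime a.1 := P.lt_dim_of_nonneg (by omega) (by rw [← pd_def]; push_cast at hm; omega)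
    have hcb := dime_add_one b; have hca := dime_add_one a
    obtain ⟨S, hbS, hSa, hScard⟩ :=
      Finset.exists_subsuperset_card_eq hsub (n := κ + 1) (by omega) (by omega)
    have hSne : S.Nonempty := (K.nonempty_of_mem b.1 b.2).mono hbS
    have hSmem : S ∈ K.faces := K.down_closed a.1 a.2 S hSa hSne
    have hpd : pd P S = pd P b.1 + k := by
      rw [pd_def, dime_of_card hScard, hκ]
    have hstp : pd P a.1 = pd P (⟨S, hSmem⟩ : Sim K).1 + 1 := by show pd P a.1 = pd P S + 1; push_cast at hm; omega
    exact wk_prepend (c := ⟨S, hSmem⟩) ⟨Or.inr hSa, hstp⟩ (ih hbS (by push_cast; exact hpd))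

lemma wk_of_up {m : ℕ} {a b : Sim K} (ha : pd P a.1 ≤ 0) (hsub : a.1 ⊆ b.1)
    (hm : pd P a.1 = pd P b.1 + m) : Wk P m a b := by
  induction m generalizing a with
  | zero =>
    have h : pd P b.1 = pd P a.1 := by push_cast at hm; omega
    rw [← eq_of_pd_eq_subset h hsub]; exact wk_refl b
  | succ k ih =>
    have hvb : P.d (dime b.1) ≤ (pd P a.1 - 1 : ℤ) := by rw [← pd_def]; push_cast at hm ⊢; omega
    obtain ⟨κ, hκ⟩ := P.exists_dim_of_nonpos (by omega) hvb
    have hak : dime a.1 < κ := P.lt_dim_of_nonpos (by rw [← pd_def]; omega) (by rw [← pd_def]; omega)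
    have hkb : κ ≤ dime b.1 := P.le_dim_of_nonpos (by omega) (by rw [← pd_def]; omega)
    have hcb := dime_add_one b; have hca := dime_add_one a
    obtain ⟨S, haS, hSb, hScard⟩ :=
      Finset.exists_subsuperset_card_eq hsub (n := κ + 1) (by omega) (by omega)
    have hSne : S.Nonempty := (K.nonempty_of_mem a.1 a.2).mono haS
    have hSmem : S ∈ K.faces := K.down_closed b.1 b.2 S hSb hSne
    have hpd : pd P S = pd P a.1 - 1 := by
      rw [pd_def, dime_of_card hScard, hκ]
    have hstp : pd P a.1 = pd P (⟨S, hSmem⟩ : Sim K).1 + 1 := by show pd P a.1 = pd P S + 1; omega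
    exact wk_prepend (c := ⟨S, hSmem⟩) ⟨Or.inl haS, hstp⟩
      (ih (by show pd P S ≤ 0; omega) hSb (by show pd P S = _; push_cast at hm ⊢; omega))

lemma wk_of_cross {m : ℕ} {a t : Sim K} (ha : 1 ≤ pd P a.1) (ht : pd P t.1 ≤ -1)
    {p : V} (hpa : p ∈ a.1) (hpt : p ∈ t.1) (hm : pd P a.1 = pd P t.1 + m) :
    Wk P m a t := by
  have hqmem : {p} ∈ K.faces :=
    K.down_closed a.1 a.2 {p} (Finset.singleton_subset_iff.mpr hpa) ⟨p, Finset.mem_singleton_self p⟩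
  set q : Sim K := ⟨{p}, hqmem⟩ with hq
  have hpdq : pd P q.1 = 0 := by
    rw [pd_def, hq, dime_of_card (Finset.card_singleton p), P.zero]
  have h1 : Wk P (pd P a.1).toNat a q :=
    wk_of_down (by omega) (Finset.singleton_subset_iff.mpr hpa)
      (by rw [hpdq, Int.toNat_of_nonneg (by omega)]; omega)
  have h2 : Wk P (-pd P t.1).toNat q t :=
    wk_of_up (by omega) (Finset.singleton_subset_iff.mpr hpt)
      (by rw [hpdq, Int.toNat_of_nonneg (by omega)]; omega)
  have := wk_trans h1 h2
  rwa [show (pd P a.1).toNat + (-pd P t.1).toNat = m by omega] at this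

end SComplex
namespace SComplex
variable {V : Type} [Fintype V] [DecidableEq V] {F : Type} [Field F]
  {K : SComplex V} {w : Finset V → ℤ} (S : RObj F K w)

lemma emap_eq {a b : Sim K} (h : Incident a.1 b.1) (e : w a.1 = w b.1 + 1) :
    emap S a b = S.map a b h e := by
  simp only [emap]
  rw [dif_pos ⟨h, e⟩]

lemma pathMap_succ_front (f : ℕ → Sim K) (k : ℕ) :
    pathMap S f (k + 1) = emap S (f 0) (f 1) ≫ pathMap S (fun i => f (i + 1)) k := by
  induction k with
  | zero => simp [pathMap]
  | succ k ih =>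
    show pathMap S f (k + 1) ≫ emap S (f (k + 1)) (f (k + 2)) = _
    rw [ih]
    simp only [pathMap, Category.assoc]

lemma emap_comp_eqToHom {a b b' : Sim K} (h : b = b') :
    emap S a b ≫ eqToHom (congrArg S.stalk h) = emap S a b' := by
  subst h; simp

lemma eqToHom_comp_emap {a a' b : Sim K} (h : a = a') :
    eqToHom (congrArg S.stalk h) ≫ emap S a' b = emap S a b := by
  subst h; simp

end SComplex
namespace SComplex
set_option maxHeartbeats 1000000 in
theorem wellDef {V : Type} [Fintype V] [DecidableEq V] {F : Type} [Field F]
    {K : SComplex V} (P : CellPerversity) (S : RObj F K (fun Δ => pd P Δ)) :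
    ∀ n (f g : ℕ → Sim K), Stps P f n → Stps P g n → ∀ (h0 : f 0 = g 0) (hn : f n = g n),
    pathMap S f n = eqToHom (congrArg S.stalk h0) ≫ pathMap S g n ≫
      eqToHom (congrArg S.stalk hn.symm) := by
  intro n
  induction n using Nat.strong_induction_on with
  | _ n IH =>
  cases n with
  | zero =>
    intro f g _ _ h0 hn
    show 𝟙 _ = _ ≫ 𝟙 _ ≫ _
    simp
  | succ n' =>
  cases n' with
  | zero =>
    intro f g _ _ h0 hn
    show 𝟙 _ ≫ emap S (f 0) (f 1) = _ ≫ (𝟙 _ ≫ emap S (g 0) (g 1)) ≫ _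
    rw [Category.id_comp, Category.id_comp, emap_comp_eqToHom S hn.symm,
      eqToHom_comp_emap S h0]
  | succ m =>
    intro f g hf hg h0 hn
    -- notation: x = f 0, t = f (m+2)
    have phiEq : ∀ (fa fb : ℕ → Sim K), Stps P fa (m+1) → Stps P fb (m+1) →
        fa 0 = fb 0 → ∀ (hfam : fa (m+1) = f (m+2)) (hfbm : fb (m+1) = f (m+2)),
        emap S (f 0) (fa 0) ≫ pathMap S fa (m+1) ≫ eqToHom (congrArg S.stalk hfam) =
        emap S (f 0) (fb 0) ≫ pathMap S fb (m+1) ≫ eqToHom (congrArg S.stalk hfbm) := by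
      intro fa fb hsfa hsfb h0' hfam hfbm
      have hn' : fa (m+1) = fb (m+1) := by rw [hfam, hfbm]
      rw [IH (m+1) (by omega) fa fb hsfa hsfb h0' hn']
      simp only [Category.assoc, eqToHom_trans]
      rw [← Category.assoc, emap_comp_eqToHom S h0']
    have childEq : ∀ (a b c : Sim K) (fa fb : ℕ → Sim K),
        Stp P (f 0) a → Stp P (f 0) b → Stp P a c → Stp P b c → Wk P m c (f (m+2)) →
        Stps P fa (m+1) → Stps P fb (m+1) → fa 0 = a → fb 0 = b →
        ∀ (hfam : fa (m+1) = f (m+2)) (hfbm : fb (m+1) = f (m+2)),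
        emap S (f 0) (fa 0) ≫ pathMap S fa (m+1) ≫ eqToHom (congrArg S.stalk hfam) =
        emap S (f 0) (fb 0) ≫ pathMap S fb (m+1) ≫ eqToHom (congrArg S.stalk hfbm) := by
      intro a b c fa fb hxa hxb hac hbc hwc hsfa hsfb hfa0 hfb0 hfam hfbm
      obtain ⟨pc, hpc0, hpcm, hspc⟩ := hwc
      rw [← hpc0] at hac hbc
      have reroute : ∀ (aa : Sim K) (faa : ℕ → Sim K), Stp P aa (pc 0) → Stps P faa (m+1) →
          faa 0 = aa → ∀ (hfaam : faa (m+1) = f (m+2)),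
          emap S (f 0) (faa 0) ≫ pathMap S faa (m+1) ≫ eqToHom (congrArg S.stalk hfaam) =
          emap S (f 0) aa ≫ emap S aa (pc 0) ≫ pathMap S pc m ≫
            eqToHom (congrArg S.stalk hpcm) := by
        intro aa faa hstep hsfaa hfaa0 hfaam
        have hq : Stps P (fun i => if i = 0 then aa else pc (i - 1)) (m + 1) := by
          intro i hi
          rcases Nat.eq_zero_or_pos i with rfl | hipos
          · simpa using hstep
          · have h1 : i ≠ 0 := by omega
            have h2 : i + 1 ≠ 0 := by omega
            simpa [h1, h2, Nat.sub_add_cancel hipos] using hspc (i-1) (by omega)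
        have hqm : (fun i => if i = 0 then aa else pc (i - 1)) (m+1) = f (m+2) := by
          simpa using hpcm
        have e1 := phiEq faa (fun i => if i = 0 then aa else pc (i - 1)) hsfaa hq
          (by simpa using hfaa0) hfaam hqm
        rw [e1, pathMap_succ_front]
        show emap S (f 0) aa ≫ (emap S aa (pc 0) ≫ pathMap S pc m) ≫
          eqToHom (congrArg S.stalk hpcm) = _
        rw [Category.assoc]
      have E : emap S (f 0) a ≫ emap S a (pc 0) = emap S (f 0) b ≫ emap S b (pc 0) := by
        rw [emap_eq S hxa.1 hxa.2, emap_eq S hac.1 hac.2, emap_eq S hxb.1 hxb.2,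
          emap_eq S hbc.1 hbc.2]
        exact S.equivAxiom (f 0) a b (pc 0) hxa.1 hxa.2 hac.1 hac.2 hxb.1 hxb.2 hbc.1 hbc.2
      rw [reroute a fa hac hsfa hfa0 hfam, reroute b fb hbc hsfb hfb0 hfbm,
        ← Category.assoc, ← Category.assoc, E]
      simp only [Category.assoc]
    have walk : ∀ (L U : Finset V) (CARD : ℕ), U ∈ K.faces → L.Nonempty →
        (∀ a' b' : Sim K, L ⊆ a'.1 → a'.1 ⊆ U → a'.1.card = CARD →
          L ⊆ b'.1 → b'.1 ⊆ U → b'.1.card = CARD → (a'.1 \ b'.1).card ≤ 1 →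
          ∃ c : Sim K, Stp P a' c ∧ Stp P b' c ∧ Wk P m c (f (m+2))) →
        (∀ s : Sim K, L ⊆ s.1 → s.1 ⊆ U → s.1.card = CARD → Wk P (m+1) s (f (m+2))) →
        (∀ s : Sim K, L ⊆ s.1 → s.1 ⊆ U → s.1.card = CARD → Stp P (f 0) s) →
        ∀ N : ℕ, ∀ (a b : Sim K) (fa fb : ℕ → Sim K),
          L ⊆ a.1 → a.1 ⊆ U → a.1.card = CARD → L ⊆ b.1 → b.1 ⊆ U → b.1.card = CARD →
          (b.1 \ a.1).card ≤ N →
          Stps P fa (m+1) → Stps P fb (m+1) → fa 0 = a → fb 0 = b →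
          ∀ (hfam : fa (m+1) = f (m+2)) (hfbm : fb (m+1) = f (m+2)),
          emap S (f 0) (fa 0) ≫ pathMap S fa (m+1) ≫ eqToHom (congrArg S.stalk hfam) =
          emap S (f 0) (fb 0) ≫ pathMap S fb (m+1) ≫ eqToHom (congrArg S.stalk hfbm) := by
      intro L U CARD hU hL hC hW hS0 N
      induction N with
      | zero =>
        intro a b fa fb hLa haU haC hLb hbU hbC hdiff hsfa hsfb hfa0 hfb0 hfam hfbm
        have hba : b.1 ⊆ a.1 := by
          rw [← Finset.sdiff_eq_empty_iff_subset]
          exact Finset.card_eq_zero.mp (by omega)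
        have hab : a = b := Subtype.ext (Finset.eq_of_subset_of_card_le hba (by omega)).symm
        exact phiEq fa fb hsfa hsfb (by rw [hfa0, hfb0, hab]) hfam hfbm
      | succ N ihN =>
        intro a b fa fb hLa haU haC hLb hbU hbC hdiff hsfa hsfb hfa0 hfb0 hfam hfbm
        by_cases hle : (b.1 \ a.1).card ≤ N
        · exact ihN a b fa fb hLa haU haC hLb hbU hbC hle hsfa hsfb hfa0 hfb0 hfam hfbm
        · have hpos : 0 < (b.1 \ a.1).card := by omega
          obtain ⟨y, hy⟩ := Finset.card_pos.mp hpos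
          have hy_b : y ∈ b.1 := (Finset.mem_sdiff.mp hy).1
          have hy_na : y ∉ a.1 := (Finset.mem_sdiff.mp hy).2
          have hanb : (a.1 \ b.1).Nonempty := by
            rw [Finset.sdiff_nonempty]
            intro hsub
            have : a.1 = b.1 := Finset.eq_of_subset_of_card_le hsub (by omega)
            rw [this] at hy_na; exact hy_na hy_b
          obtain ⟨z, hz⟩ := hanb
          have hz_a : z ∈ a.1 := (Finset.mem_sdiff.mp hz).1
          have hz_nb : z ∉ b.1 := (Finset.mem_sdiff.mp hz).2
          have hz_nL : z ∉ L := fun h => hz_nb (hLb h)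
          have hLa' : L ⊆ insert y (a.1.erase z) := fun v hv =>
            Finset.mem_insert_of_mem (Finset.mem_erase.mpr ⟨fun he => hz_nL (he ▸ hv), hLa hv⟩)
          have ha'U : insert y (a.1.erase z) ⊆ U := by
            intro v hv
            rcases Finset.mem_insert.mp hv with rfl | hv'
            · exact hbU hy_b
            · exact haU (Finset.mem_of_mem_erase hv')
          have ha'C : (insert y (a.1.erase z)).card = CARD := by
            rw [Finset.card_insert_of_notMem (fun h => hy_na (Finset.mem_of_mem_erase h)),
              Finset.card_erase_of_mem hz_a]
            have : 1 ≤ a.1.card := card_pos_of_sim a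
            omega
          have ha'ne : (insert y (a.1.erase z)).Nonempty := hL.mono hLa'
          have ha'mem : insert y (a.1.erase z) ∈ K.faces := K.down_closed U hU _ ha'U ha'ne
          set A' : Sim K := ⟨insert y (a.1.erase z), ha'mem⟩ with hA'
          have hdiffaA' : (a.1 \ A'.1).card ≤ 1 := by
            have hss : a.1 \ A'.1 ⊆ {z} := by
              intro v hv
              rcases Finset.mem_sdiff.mp hv with ⟨hva, hva'⟩
              simp only [hA', Finset.mem_insert, Finset.mem_erase, not_or, not_and,
                not_not] at hva'
              rcases em (v = z) with h | h
              · exact Finset.mem_singleton.mpr h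
              · exact absurd hva (hva'.2 h)
            calc (a.1 \ A'.1).card ≤ ({z} : Finset V).card := Finset.card_le_card hss
            _ = 1 := Finset.card_singleton z
          obtain ⟨c, hac, ha'c, hwc⟩ := hC a A' hLa haU haC hLa' ha'U ha'C hdiffaA'
          obtain ⟨fa', hfa'0, hfa'm, hsfa'⟩ := hW A' hLa' ha'U ha'C
          have step1 := childEq a A' c fa fa' (hS0 a hLa haU haC) (hS0 A' hLa' ha'U ha'C)
            hac ha'c hwc hsfa hsfa' hfa0 hfa'0 hfam hfa'm
          have hdiff' : (b.1 \ A'.1).card ≤ N := by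
            have hsub : b.1 \ A'.1 ⊆ (b.1 \ a.1).erase y := by
              intro v hv
              rcases Finset.mem_sdiff.mp hv with ⟨hvb, hva'⟩
              simp only [hA', Finset.mem_insert, Finset.mem_erase, not_or] at hva'
              refine Finset.mem_erase.mpr ⟨hva'.1, Finset.mem_sdiff.mpr ⟨hvb, fun hva => ?_⟩⟩
              exact hva'.2 ⟨fun he => hz_nb (he ▸ hvb), hva⟩
            calc (b.1 \ A'.1).card ≤ ((b.1 \ a.1).erase y).card := Finset.card_le_card hsub
            _ = (b.1 \ a.1).card - 1 := Finset.card_erase_of_mem hy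
            _ ≤ N := by omega
          have step2 := ihN A' b fa' fb hLa' ha'U ha'C hLb hbU hbC hdiff' hsfa' hsfb
            hfa'0 hfb0 hfa'm hfbm
          rw [step1, step2]
    have claim : ∀ (a b : Sim K) (fa fb : ℕ → Sim K), Stp P (f 0) a → Stp P (f 0) b →
        Stps P fa (m+1) → Stps P fb (m+1) → fa 0 = a → fb 0 = b →
        ∀ (hfam : fa (m+1) = f (m+2)) (hfbm : fb (m+1) = f (m+2)),
        emap S (f 0) (fa 0) ≫ pathMap S fa (m+1) ≫ eqToHom (congrArg S.stalk hfam) =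
        emap S (f 0) (fb 0) ≫ pathMap S fb (m+1) ≫ eqToHom (congrArg S.stalk hfbm) := by
      intro a b fa fb hxa hxb hsfa hsfb hfa0 hfb0 hfam hfbm
      have hwa : Wk P (m+1) a (f (m+2)) := ⟨fa, hfa0, hfam, hsfa⟩
      have hwb : Wk P (m+1) b (f (m+2)) := ⟨fb, hfb0, hfbm, hsfb⟩
      have hpdab : pd P a.1 = pd P b.1 := by
        have h1 := hxa.2; have h2 := hxb.2; omega
      have hcab : a.1.card = b.1.card := card_eq_of_pd_eq hpdab
      have hpdt : pd P a.1 = pd P (f (m+2)).1 + (m+1) := wk_pd hwa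
      have hdat := dime_add_one a
      have hdtt := dime_add_one (f (m+2))
      rcases lt_trichotomy (pd P a.1) 0 with hu | hu | hu
      · -- ascending case: x ⊆ a,b ⊆ t
        have hxsa : (f 0).1 ⊆ a.1 := (stp_up hxa (by omega)).1
        have hxsb : (f 0).1 ⊆ b.1 := (stp_up hxb (by omega)).1
        have hsat : a.1 ⊆ (f (m+2)).1 := wk_up_subset hwa (by omega)
        have hsbt : b.1 ⊆ (f (m+2)).1 := wk_up_subset hwb (by omega)
        refine walk (f 0).1 (f (m+2)).1 a.1.card (f (m+2)).2 (K.nonempty_of_mem _ (f 0).2)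
          ?_ ?_ ?_ (b.1 \ a.1).card a b fa fb hxsa hsat rfl hxsb hsbt hcab.symm le_rfl
          hsfa hsfb hfa0 hfb0 hfam hfbm
        · intro a' b' hLa' ha'U ha'C hLb' hb'U hb'C hdiff
          have hpda' : pd P a'.1 = pd P a.1 := pd_eq_of_card_eq ha'C
          have hpdb' : pd P b'.1 = pd P a.1 := pd_eq_of_card_eq hb'C
          have hda' := dime_add_one a'
          obtain ⟨κ, hκ⟩ := P.exists_dim_of_nonpos (v := pd P a.1 - 1) (by omega)
            (j := dime (f (m+2)).1) (by rw [← pd_def]; omega)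
          have h1 : dime a'.1 < κ := P.lt_dim_of_nonpos
            (by rw [← pd_def]; omega) (by rw [← pd_def]; omega)
          have h2 : κ ≤ dime (f (m+2)).1 := P.le_dim_of_nonpos (by omega)
            (by rw [← pd_def]; omega)
          have hsubU : a'.1 ∪ b'.1 ⊆ (f (m+2)).1 := Finset.union_subset ha'U hb'U
          have hiub := Finset.card_union_add_card_inter a'.1 b'.1
          have hisd := Finset.card_sdiff_add_card_inter a'.1 b'.1
          obtain ⟨c0, hc1, hc2, hc3⟩ := Finset.exists_subsuperset_card_eq hsubU
            (n := κ + 1) (by omega) (by omega)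
          have hc0ne : c0.Nonempty := (K.nonempty_of_mem a'.1 a'.2).mono
            (Finset.subset_union_left.trans hc1)
          have hc0mem : c0 ∈ K.faces := K.down_closed _ (f (m+2)).2 c0 hc2 hc0ne
          have hpdc : pd P c0 = pd P a.1 - 1 := by rw [pd_def, dime_of_card hc3, hκ]
          refine ⟨⟨c0, hc0mem⟩, ⟨Or.inl (Finset.subset_union_left.trans hc1), by
              show pd P a'.1 = pd P c0 + 1; omega⟩,
            ⟨Or.inl (Finset.subset_union_right.trans hc1), by
              show pd P b'.1 = pd P c0 + 1; omega⟩, ?_⟩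
          exact wk_of_up (by show pd P c0 ≤ 0; omega) hc2
            (by show pd P c0 = _ + (m : ℤ); push_cast at hpdt ⊢; omega)
        · intro s hLs hsU hsC
          have := pd_eq_of_card_eq (P := P) hsC
          exact wk_of_up (by omega) hsU (by push_cast at hpdt ⊢; omega)
        · intro s hLs hsU hsC
          exact ⟨Or.inl hLs, by have := pd_eq_of_card_eq (P := P) hsC; have := hxa.2; omega⟩
      · -- pd a = 0 : vertices, single hop
        have hsat : a.1 ⊆ (f (m+2)).1 := wk_up_subset hwa (by omega)
        have hsbt : b.1 ⊆ (f (m+2)).1 := wk_up_subset hwb (by omega)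
        obtain ⟨κ, hκ⟩ := P.exists_dim_of_nonpos (v := -1) (by omega)
          (j := dime (f (m+2)).1) (by rw [← pd_def]; omega)
        have hκpos : 0 < κ := P.lt_dim_of_nonpos (i := 0) (by simp [P.zero])
          (by rw [P.zero, hκ]; omega)
        have hκt : κ ≤ dime (f (m+2)).1 := P.le_dim_of_nonpos (by omega)
          (by rw [← pd_def]; omega)
        have hcard1 : a.1.card = 1 := by
          have hd0 : dime a.1 = 0 := P.d_injective (by rw [P.zero, ← pd_def]; omega)
          omega
        have hsubU : a.1 ∪ b.1 ⊆ (f (m+2)).1 := Finset.union_subset hsat hsbt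
        have hcu : (a.1 ∪ b.1).card ≤ 2 :=
          le_trans (Finset.card_union_le _ _) (by omega)
        obtain ⟨c0, hc1, hc2, hc3⟩ := Finset.exists_subsuperset_card_eq hsubU
          (n := κ + 1) (by omega) (by omega)
        have hc0ne : c0.Nonempty := (K.nonempty_of_mem a.1 a.2).mono
          (Finset.subset_union_left.trans hc1)
        have hc0mem : c0 ∈ K.faces := K.down_closed _ (f (m+2)).2 c0 hc2 hc0ne
        have hpdc : pd P c0 = -1 := by rw [pd_def, dime_of_card hc3, hκ]
        refine childEq a b ⟨c0, hc0mem⟩ fa fb hxa hxb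
          ⟨Or.inl (Finset.subset_union_left.trans hc1), by
            show pd P a.1 = pd P c0 + 1; omega⟩
          ⟨Or.inl (Finset.subset_union_right.trans hc1), by
            show pd P b.1 = pd P c0 + 1; omega⟩
          (wk_of_up (by show pd P c0 ≤ 0; omega) hc2
            (by show pd P c0 = _ + (m : ℤ); push_cast at hpdt ⊢; omega))
          hsfa hsfb hfa0 hfb0 hfam hfbm
      · -- pd a ≥ 1
        have hax : a.1 ⊆ (f 0).1 := (stp_down hxa (by omega)).1
        have hbx : b.1 ⊆ (f 0).1 := (stp_down hxb (by omega)).1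
        rcases le_or_gt 0 (pd P (f (m+2)).1) with hvt | hvt
        · -- descending
          have hsat : (f (m+2)).1 ⊆ a.1 := wk_down_subset hwa hvt
          have hsbt : (f (m+2)).1 ⊆ b.1 := wk_down_subset hwb hvt
          refine walk (f (m+2)).1 (f 0).1 a.1.card (f 0).2
            (K.nonempty_of_mem _ (f (m+2)).2)
            ?_ ?_ ?_ (b.1 \ a.1).card a b fa fb hsat hax rfl hsbt hbx hcab.symm le_rfl
            hsfa hsfb hfa0 hfb0 hfam hfbm
          · intro a' b' hLa' ha'U ha'C hLb' hb'U hb'C hdiff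
            have hpda' := pd_eq_of_card_eq (P := P) ha'C
            have hpdb' := pd_eq_of_card_eq (P := P) hb'C
            have hda' := dime_add_one a'
            obtain ⟨κ, hκ⟩ := P.exists_dim_of_nonneg (v := pd P a.1 - 1) (by omega)
              (j := dime a'.1) (by rw [← pd_def]; omega)
            have h1 : κ < dime a'.1 := P.lt_dim_of_nonneg (by omega)
              (by rw [← pd_def]; omega)
            have h2 : dime (f (m+2)).1 ≤ κ := P.le_dim_of_nonneg
              (by rw [← pd_def]; omega) (by rw [← pd_def]; omega)
            have hisd := Finset.card_sdiff_add_card_inter a'.1 b'.1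
            obtain ⟨c0, hc1, hc2, hc3⟩ := Finset.exists_subsuperset_card_eq
              (Finset.subset_inter hLa' hLb') (n := κ + 1) (by omega) (by omega)
            have hc0ne : c0.Nonempty := (K.nonempty_of_mem _ (f (m+2)).2).mono hc1
            have hc0mem : c0 ∈ K.faces := K.down_closed _ a'.2 c0
              (hc2.trans Finset.inter_subset_left) hc0ne
            have hpdc : pd P c0 = pd P a.1 - 1 := by rw [pd_def, dime_of_card hc3, hκ]
            exact ⟨⟨c0, hc0mem⟩,
              ⟨Or.inr (hc2.trans Finset.inter_subset_left), by
                show pd P a'.1 = pd P c0 + 1; omega⟩,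
              ⟨Or.inr (hc2.trans Finset.inter_subset_right), by
                show pd P b'.1 = pd P c0 + 1; omega⟩,
              wk_of_down hvt hc1
                (by show pd P c0 = _ + (m : ℤ); push_cast at hpdt ⊢; omega)⟩
          · intro s hLs hsU hsC
            have := pd_eq_of_card_eq (P := P) hsC
            exact wk_of_down hvt hLs (by push_cast at hpdt ⊢; omega)
          · intro s hLs hsU hsC
            exact ⟨Or.inr hsU, by
              have := pd_eq_of_card_eq (P := P) hsC; have := hxa.2; omega⟩
        · -- crossing
          obtain ⟨p, hpa, hpt⟩ := wk_cross_mem hwa (by omega) (by omega)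
          obtain ⟨q, hqb, hqt⟩ := wk_cross_mem hwb (by omega) (by omega)
          have hCcross : ∀ r : V, r ∈ (f (m+2)).1 →
              ∀ a' b' : Sim K, {r} ⊆ a'.1 → a'.1 ⊆ (f 0).1 → a'.1.card = a.1.card →
              {r} ⊆ b'.1 → b'.1 ⊆ (f 0).1 → b'.1.card = a.1.card →
              (a'.1 \ b'.1).card ≤ 1 →
              ∃ c : Sim K, Stp P a' c ∧ Stp P b' c ∧ Wk P m c (f (m+2)) := by
            intro r hrt a' b' hLa' ha'U ha'C hLb' hb'U hb'C hdiff
            have hpda' := pd_eq_of_card_eq (P := P) ha'C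
            have hpdb' := pd_eq_of_card_eq (P := P) hb'C
            have hda' := dime_add_one a'
            obtain ⟨κ, hκ⟩ := P.exists_dim_of_nonneg (v := pd P a.1 - 1) (by omega)
              (j := dime a'.1) (by rw [← pd_def]; omega)
            have h1 : κ < dime a'.1 := P.lt_dim_of_nonneg (by omega)
              (by rw [← pd_def]; omega)
            have hisd := Finset.card_sdiff_add_card_inter a'.1 b'.1
            obtain ⟨c0, hc1, hc2, hc3⟩ := Finset.exists_subsuperset_card_eq
              (Finset.subset_inter hLa' hLb') (n := κ + 1)
              (by rw [Finset.card_singleton]; omega) (by omega)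
            have hc0ne : c0.Nonempty := ⟨r, hc1 (Finset.mem_singleton_self r)⟩
            have hc0mem : c0 ∈ K.faces := K.down_closed _ a'.2 c0
              (hc2.trans Finset.inter_subset_left) hc0ne
            have hpdc : pd P c0 = pd P a.1 - 1 := by rw [pd_def, dime_of_card hc3, hκ]
            refine ⟨⟨c0, hc0mem⟩,
              ⟨Or.inr (hc2.trans Finset.inter_subset_left), by
                show pd P a'.1 = pd P c0 + 1; omega⟩,
              ⟨Or.inr (hc2.trans Finset.inter_subset_right), by
                show pd P b'.1 = pd P c0 + 1; omega⟩, ?_⟩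
            rcases lt_or_ge (pd P a.1) 2 with h2 | h2
            · have hκ0 : κ = 0 := P.d_injective (by rw [hκ, P.zero]; omega)
              obtain ⟨v0, hv0⟩ := Finset.card_eq_one.mp (by rw [hc3, hκ0])
              have hceq : c0 = {r} := by
                rw [hv0]
                congr 1
                have hrc := hc1 (Finset.mem_singleton_self r)
                rw [hv0] at hrc
                exact (Finset.mem_singleton.mp hrc).symm
              exact wk_of_up (by show pd P c0 ≤ 0; omega)
                (by show c0 ⊆ (f (m+2)).1; rw [hceq]; exact Finset.singleton_subset_iff.mpr hrt)
                (by show pd P c0 = _ + (m : ℤ); push_cast at hpdt ⊢; omega)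
            · exact wk_of_cross (by show 1 ≤ pd P c0; omega) (by omega)
                (show r ∈ c0 from hc1 (Finset.mem_singleton_self r)) hrt
                (by show pd P c0 = _ + (m : ℤ); push_cast at hpdt ⊢; omega)
          have hWcross : ∀ r : V, r ∈ (f (m+2)).1 → ∀ s : Sim K, {r} ⊆ s.1 →
              s.1 ⊆ (f 0).1 → s.1.card = a.1.card → Wk P (m+1) s (f (m+2)) := by
            intro r hrt s hLs hsU hsC
            have := pd_eq_of_card_eq (P := P) hsC
            exact wk_of_cross (by omega) (by omega)
              (hLs (Finset.mem_singleton_self r)) hrt (by push_cast at hpdt ⊢; omega)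
          have hSx : ∀ (L : Finset V), ∀ s : Sim K, L ⊆ s.1 → s.1 ⊆ (f 0).1 →
              s.1.card = a.1.card → Stp P (f 0) s := fun L s _ hsU hsC =>
            ⟨Or.inr hsU, by have := pd_eq_of_card_eq (P := P) hsC; have := hxa.2; omega⟩
          have hda : 0 < dime a.1 := P.lt_dim_of_nonneg (i := 0) (by simp [P.zero])
            (by rw [P.zero, ← pd_def]; omega)
          obtain ⟨a2, hpa2, hqa2, ha2x, ha2c⟩ : ∃ a2 : Finset V,
              p ∈ a2 ∧ q ∈ a2 ∧ a2 ⊆ (f 0).1 ∧ a2.card = a.1.card := by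
            by_cases hqa : q ∈ a.1
            · exact ⟨a.1, hpa, hqa, hax, rfl⟩
            · have hne : (a.1.erase p).Nonempty := by
                rw [← Finset.card_pos, Finset.card_erase_of_mem hpa]; omega
              obtain ⟨z, hz⟩ := hne
              have hz_a : z ∈ a.1 := Finset.mem_of_mem_erase hz
              have hz_np : z ≠ p := Finset.ne_of_mem_erase hz
              refine ⟨insert q (a.1.erase z),
                Finset.mem_insert_of_mem (Finset.mem_erase.mpr ⟨Ne.symm hz_np, hpa⟩),
                Finset.mem_insert_self q _, ?_, ?_⟩
              · exact Finset.insert_subset_iff.mpr ⟨hbx hqb,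
                  (Finset.erase_subset _ _).trans hax⟩
              · rw [Finset.card_insert_of_notMem
                  (fun h => hqa (Finset.mem_of_mem_erase h)),
                  Finset.card_erase_of_mem hz_a]
                omega
          have ha2mem : a2 ∈ K.faces := K.down_closed _ (f 0).2 a2 ha2x ⟨p, hpa2⟩
          have hwa2 : Wk P (m+1) ⟨a2, ha2mem⟩ (f (m+2)) :=
            hWcross p hpt ⟨a2, ha2mem⟩ (Finset.singleton_subset_iff.mpr hpa2) ha2x ha2c
          obtain ⟨f2, hf20, hf2m, hsf2⟩ := hwa2
          have eq1 := walk {p} (f 0).1 a.1.card (f 0).2 (Finset.singleton_nonempty p)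
            (hCcross p hpt) (hWcross p hpt) (hSx {p}) (a2 \ a.1).card a ⟨a2, ha2mem⟩ fa f2
            (Finset.singleton_subset_iff.mpr hpa) hax rfl
            (Finset.singleton_subset_iff.mpr hpa2) ha2x ha2c le_rfl
            hsfa hsf2 hfa0 hf20 hfam hf2m
          have eq2 := walk {q} (f 0).1 a.1.card (f 0).2 (Finset.singleton_nonempty q)
            (hCcross q hqt) (hWcross q hqt) (hSx {q}) (b.1 \ a2).card ⟨a2, ha2mem⟩ b f2 fb
            (Finset.singleton_subset_iff.mpr hqa2) ha2x ha2c
            (Finset.singleton_subset_iff.mpr hqb) hbx hcab.symm le_rfl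
            hsf2 hsfb hf20 hfb0 hf2m hfbm
          rw [eq1, eq2]
    -- final assembly
    have hstep_f : Stp P (f 0) (f 1) := hf 0 (by omega)
    have hstep_g : Stp P (f 0) (g 1) := by rw [h0]; exact hg 0 (by omega)
    have hsfa : Stps P (fun i => f (i+1)) (m+1) := fun i hi => hf (i+1) (by omega)
    have hsfb : Stps P (fun i => g (i+1)) (m+1) := fun i hi => hg (i+1) (by omega)
    have hfbm : (fun i => g (i+1)) (m+1) = f (m+2) := hn.symm
    have main := claim (f 1) (g 1) (fun i => f (i+1)) (fun i => g (i+1)) hstep_f hstep_g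
      hsfa hsfb rfl rfl rfl hfbm
    rw [pathMap_succ_front S f (m+1), pathMap_succ_front S g (m+1)]
    calc emap S (f 0) (f 1) ≫ pathMap S (fun i => f (i+1)) (m+1)
        = emap S (f 0) ((fun i => f (i+1)) 0) ≫ pathMap S (fun i => f (i+1)) (m+1) ≫
            eqToHom (congrArg S.stalk (rfl : (fun i => f (i+1)) (m+1) = f (m+2))) := by
          have he : eqToHom (congrArg S.stalk
              (rfl : (fun i => f (i+1)) (m+1) = f (m+2))) = 𝟙 _ := rfl
          rw [he, Category.comp_id]
      _ = emap S (f 0) ((fun i => g (i+1)) 0) ≫ pathMap S (fun i => g (i+1)) (m+1) ≫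
            eqToHom (congrArg S.stalk hfbm) := main
      _ = eqToHom (congrArg S.stalk h0) ≫ (emap S (g 0) (g 1) ≫
            pathMap S (fun i => g (i+1)) (m+1)) ≫ eqToHom (congrArg S.stalk hn.symm) := by
          rw [← eqToHom_comp_emap S h0]
          simp only [Category.assoc]
end SComplex
namespace SComplex
lemma isLadder_w {V : Type} [Fintype V] [DecidableEq V] {K : SComplex V}
    {w : Finset V → ℤ} {f : ℕ → Finset V} {r : ℕ} (h : IsLadder K w f r) :
    w (f 0) = w (f r) + r := by
  induction r with
  | zero => simp
  | succ k ih =>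
    have hk : IsLadder K w f k := ⟨fun i hi => h.1 i (by omega), fun i hi => h.2 i (by omega)⟩
    have h2 := (h.2 k (by omega)).2
    have := ih hk
    push_cast
    omega
end SComplex
/-- Lemma-Definition 1.2.5: two sequences `Δ_I = Δ_0 > Δ_1 > … > Δ_n = Δ_T` and
`Δ_I = Δ'_0 > Δ'_1 > … > Δ'_n = Δ_T` in `Λ(X,δ)` with `δ`-values decreasing by exactly
one at each step (consecutive members being automatically incident) induce the same
composite `s(Δ_{n−1},Δ_n) ∘ … ∘ s(Δ_0,Δ_1) = s(Δ'_{n−1},Δ'_n) ∘ … ∘ s(Δ'_0,Δ'_1)`,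
so `s(Δ_I,Δ_T) : S(Δ_I) → S(Δ_T)` is well defined. -/
theorem statement10 {V : Type} [Fintype V] [DecidableEq V] {F : Type} [Field F]
    [CharZero F] (K : SComplex V) (hne : K.faces.Nonempty) (hconn : K.Connected)
    (P : CellPerversity) (w : Finset V → ℤ) (hw : w = fun Δ => pd P Δ)
    (S : RObj F K w) (ΔI ΔT : Sim K) (hIT : lamGE K w ΔI.1 ΔT.1)
    (f g : ℕ → Sim K) (n : ℕ)
    (hf0 : f 0 = ΔI) (hfn : f n = ΔT) (hg0 : g 0 = ΔI) (hgn : g n = ΔT)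
    (hf : ∀ i < n, lamGE K w (f i).1 (f (i + 1)).1 ∧ f i ≠ f (i + 1) ∧
      w (f i).1 = w (f (i + 1)).1 + 1)
    (hg : ∀ i < n, lamGE K w (g i).1 (g (i + 1)).1 ∧ g i ≠ g (i + 1) ∧
      w (g i).1 = w (g (i + 1)).1 + 1) :
    pathMap S f n = eqToHom (by rw [hf0, hg0]) ≫ pathMap S g n ≫
      eqToHom (by rw [hfn, hgn]) := by
  subst hw
  have mkSteps : ∀ (h : ℕ → Sim K),
      (∀ i < n, lamGE K (fun Δ => pd P Δ) (h i).1 (h (i + 1)).1 ∧ h i ≠ h (i + 1) ∧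
        (fun Δ => pd P Δ) (h i).1 = (fun Δ => pd P Δ) (h (i + 1)).1 + 1) →
      Stps P h n := by
    intro h hh i hi
    obtain ⟨hge, hne, hwd⟩ := hh i hi
    obtain ⟨l, r, hl, hl0, hlr⟩ := hge
    have hcount := isLadder_w hl
    rw [hl0, hlr] at hcount
    have hwd' : pd P (h i).1 = pd P (h (i + 1)).1 + 1 := hwd
    have hcount' : pd P (h i).1 = pd P (h (i + 1)).1 + r := hcount
    have hr1 : r = 1 := by omega
    subst hr1
    have hinc := (hl.2 0 (by omega)).1
    rw [hl0, hlr] at hinc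
    exact ⟨hinc, hwd'⟩
  have h0' : f 0 = g 0 := by rw [hf0, hg0]
  have hn' : f n = g n := by rw [hfn, hgn]
  exact wellDef P S n f g (mkSteps f hf) (mkSteps g hg) h0' hn'
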